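/- arXiv:0804.0526 — 2 statements merged into one kernel-verified Lean document; each statement's English description precedes it below -/
import Mathlib

section
/- Let P ⊆ ℤ be the set of prime numbers and let n be a positive even integer. The partial translation operator tₙ on ℓ²(P) is not a compact operator if and only if there exist infinitely many primes p such that p + n is also prime (i.e., de Polignac's conjecture holds for n). -/
/-!
If only finitely many primes `p` have `p + n` prime, `tₙ` kills all but finitely many basis
vectors of `ℓ²(P)`, so it is a finite sum of rank-one operators and hence compact. If infinitely
many do, `tₙ` maps infinitely many unit vectors onto an orthonormal family, whose members lie at
mutual distance `√2`; such a family has no convergent subsequence, so `tₙ` is not compact.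
-/

noncomputable section

/-- The set of prime numbers, viewed as a subset of ℤ. -/
abbrev Pr : Set ℤ := {x : ℤ | ∃ p : ℕ, p.Prime ∧ x = (p : ℤ)}

abbrev l2P : Type := lp (fun _ : Pr => ℂ) 2

/-- The standard basis vector δₓ of ℓ²(P). -/
def δ (x : Pr) : l2P := lp.single 2 x 1

theorem IsCompact.exists_dist_lt {X : Type*} [PseudoMetricSpace X] {K : Set X}
    (hK : IsCompact K) {u : ℕ → X} (hu : ∀ n, u n ∈ K) {ε : ℝ} (hε : 0 < ε) :
    ∃ m n, m ≠ n ∧ dist (u m) (u n) < ε := by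
  obtain ⟨_, -, φ, hφ, hlim⟩ := hK.tendsto_subseq hu
  obtain ⟨N, hN⟩ := Metric.cauchySeq_iff'.1 hlim.cauchySeq ε hε
  exact ⟨φ (N + 1), φ N, (hφ N.lt_succ_self).ne', hN (N + 1) N.le_succ⟩

theorem Orthonormal.norm_sub_sq_eq_two {ι 𝕜 E : Type*} [RCLike 𝕜] [SeminormedAddCommGroup E]
    [InnerProductSpace 𝕜 E] {v : ι → E} (hv : Orthonormal 𝕜 v) {i j : ι} (hij : i ≠ j) :
    ‖v i - v j‖ ^ 2 = 2 := by
  rw [_root_.norm_sub_sq (𝕜 := 𝕜), hv.inner_eq_zero hij, hv.norm_eq_one, hv.norm_eq_one]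
  norm_num

theorem Orthonormal.not_isCompactOperator {ι 𝕜 E F : Type*} [RCLike 𝕜] [Infinite ι]
    [SeminormedAddCommGroup E] [NormedSpace 𝕜 E] [SeminormedAddCommGroup F]
    [InnerProductSpace 𝕜 F] {T : E →L[𝕜] F} {v : ι → E} (hv : Bornology.IsBounded (Set.range v))
    (hTv : Orthonormal 𝕜 (T ∘ v)) : ¬ IsCompactOperator T := by
  intro hT
  obtain ⟨K, hK, hTK⟩ := hT.image_subset_compact_of_bounded (f := (T : E →ₗ[𝕜] F)) hv
  let e := Infinite.natEmbedding ι
  obtain ⟨m, n, hmn, hdist⟩ :=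
    hK.exists_dist_lt (u := fun k => T (v (e k))) (fun k => hTK ⟨v (e k), ⟨e k, rfl⟩, rfl⟩) one_pos
  have hsq := hTv.norm_sub_sq_eq_two (e.injective.ne hmn)
  rw [dist_eq_norm] at hdist
  simp only [Function.comp_apply] at hsq
  nlinarith [norm_nonneg (T (v (e m)) - T (v (e n)))]

theorem lp.orthonormal_single {ι 𝕜 : Type*} [RCLike 𝕜] [DecidableEq ι] :
    Orthonormal 𝕜 (fun i : ι => lp.single 2 i (1 : 𝕜)) := by
  rw [orthonormal_iff_ite]
  intro i j
  rw [lp.inner_single_left, lp.single_apply, Pi.single_apply]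
  split_ifs <;> simp

theorem lp.isCompactOperator_of_apply_single_eq_zero {ι 𝕜 E : Type*} [RCLike 𝕜] [DecidableEq ι]
    [NormedAddCommGroup E] [NormedSpace 𝕜 E] {p : ENNReal} [Fact (1 ≤ p)] (hp : p ≠ ⊤)
    (T : lp (fun _ : ι => 𝕜) p →L[𝕜] E) (s : Finset ι)
    (hT : ∀ i ∉ s, T (lp.single p i 1) = 0) : IsCompactOperator T := by
  have hsum : T = ∑ i ∈ s, (ContinuousLinearMap.toSpanSingleton 𝕜 (T (lp.single p i 1))).comp
      (lp.evalCLM 𝕜 (fun _ : ι => 𝕜) p i) := by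
    refine lp.ext_continuousLinearMap hp fun j => ContinuousLinearMap.ext_ring ?_
    by_cases hj : j ∈ s
    · simp [lp.evalCLM, lp.single_apply, Pi.single_apply, hj]
    · simpa [lp.evalCLM, lp.single_apply, Pi.single_apply, hj] using hT j hj
  rw [hsum]
  exact Submodule.sum_mem (compactOperator (RingHom.id 𝕜) _ _) fun i _ =>
    (isCompactOperator_of_locallyCompactSpace_dom (lp.evalCLM 𝕜 (fun _ : ι => 𝕜) p i)).clm_comp
      (ContinuousLinearMap.toSpanSingleton 𝕜 (T (lp.single p i 1)))

theorem orthonormal_δ : Orthonormal ℂ δ := lp.orthonormal_single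

theorem stmt10_general (n : ℤ)
    (t : l2P →L[ℂ] l2P)
    (ht : ∀ x : Pr,
      (∀ h : (x : ℤ) + n ∈ Pr, t (δ x) = δ ⟨(x : ℤ) + n, h⟩) ∧
      ((x : ℤ) + n ∉ Pr → t (δ x) = 0)) :
    ¬ IsCompactOperator t ↔ {p : ℤ | p ∈ Pr ∧ p + n ∈ Pr}.Infinite := by
  set S : Set Pr := {x | (x : ℤ) + n ∈ Pr}
  have hS : {p : ℤ | p ∈ Pr ∧ p + n ∈ Pr} = Subtype.val '' S := by
    ext p
    exact ⟨fun ⟨hp, hpn⟩ => ⟨⟨p, hp⟩, hpn, rfl⟩, fun ⟨x, hx, hxp⟩ => hxp ▸ ⟨x.2, hx⟩⟩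
  rw [hS, Set.infinite_image_iff Subtype.val_injective.injOn]
  constructor
  · intro hnc
    by_contra hinf
    obtain hfin : S.Finite := Set.not_infinite.1 hinf
    refine hnc (lp.isCompactOperator_of_apply_single_eq_zero ENNReal.ofNat_ne_top t hfin.toFinset ?_)
    exact fun x hx => (ht x).2 fun h => hx (hfin.mem_toFinset.2 h)
  · intro hinf
    have := hinf.to_subtype
    have hshift : t ∘ (fun x : S => δ x) = δ ∘ fun x : S => ⟨(x : ℤ) + n, x.2⟩ :=
      funext fun x => (ht x).1 x.2
    refine Orthonormal.not_isCompactOperator (v := fun x : S => δ x) ?_ ?_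
    · exact isBounded_iff_forall_norm_le.2
        ⟨1, Set.forall_mem_range.2 fun x => (orthonormal_δ.norm_eq_one x).le⟩
    · rw [hshift]
      exact orthonormal_δ.comp _ fun x y hxy =>
        Subtype.ext (Subtype.ext (add_right_cancel (congrArg Subtype.val hxy)))

/-- For a positive even integer `n`, the partial translation operator `tₙ` on `ℓ²(P)`
(`P` the primes) is not compact if and only if there are infinitely many primes `p`
with `p + n` prime (de Polignac's conjecture for `n`). -/
theorem stmt10 (n : ℤ) (hn : 0 < n) (hn2 : Even n)
    (t : l2P →L[ℂ] l2P)
    (ht : ∀ x : Pr,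
      (∀ h : (x : ℤ) + n ∈ Pr, t (δ x) = δ ⟨(x : ℤ) + n, h⟩) ∧
      ((x : ℤ) + n ∉ Pr → t (δ x) = 0)) :
    ¬ IsCompactOperator t ↔ {p : ℤ | p ∈ Pr ∧ p + n ∈ Pr}.Infinite :=
  stmt10_general n t ht
end
end

section
/- Let P ⊆ ℤ be the set of prime numbers. The C*-subalgebra of B(ℓ²(P)) generated by the family {tₙ : n ∈ ℤ} equals the set of operators of the form λ·1 + k with λ ∈ ℂ and k a compact operator on ℓ²(P) if and only if for every positive even integer n the set of primes p with p + n prime is finite (i.e., if and only if de Polignac's conjecture fails for every even n). -/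
noncomputable section

/-!
Everything is decided by which partial translations are compact. If every even gap between primes
occurs only finitely often, then so does every nonzero gap (an odd gap forces the prime `2`), so
each `tₙ` with `n ≠ 0` has finite rank and `t₀ = 1`; hence the generated C*-algebra lies in the
closed *-algebra `ℂ·1 + 𝒦`. Conversely the matrix units `|δₚ⟩⟨δ_q|` always lie in the generated
*-algebra: `t₋ₐ tₐ` is the projection onto the primes `x` with `x + a` prime, a parity shift `a`
makes that the single prime `p`, and `t_{p-q}` moves `δ_q` to `δₚ`. Compressing a compact operator
by finite coordinate projections then puts all of `𝒦` in the closure. Finally, if `tₙ = c·1 + k`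
with `k` compact, then `‖k δₓ‖ ≥ 1` whenever `x` and `x + n` are both prime, whereas `k δₓ → 0`
along the basis, so such `x` are finite in number.
-/

open Filter Topology InnerProductSpace ContinuousLinearMap

section NormedSpace

variable {𝕜 E F G : Type*} [RCLike 𝕜] [NormedAddCommGroup E] [NormedSpace 𝕜 E]
  [NormedAddCommGroup F] [NormedSpace 𝕜 F] [NormedAddCommGroup G] [NormedSpace 𝕜 G]

/-- By Arzelà–Ascoli, a bounded family converging pointwise converges uniformly on the compact
set `closure (k '' closedBall 0 1)`. -/
theorem IsCompactOperator.tendsto_comp_of_tendsto_apply {k : E →L[𝕜] F}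
    (hk : IsCompactOperator k) {α : Type*} {l : Filter α} {P : α → F →L[𝕜] G} {Q : F →L[𝕜] G}
    {C : ℝ} (hPC : ∀ a, ‖P a‖ ≤ C) (hPQ : ∀ y, Tendsto (fun a => P a y) l (𝓝 (Q y))) :
    Tendsto (fun a => P a ∘L k) l (𝓝 (Q ∘L k)) := by
  have hequi : Equicontinuous fun a => ⇑(P a) :=
    ((NormedSpace.equicontinuous_TFAE P).out 5 1).mp (⟨C, hPC⟩ : ∃ C, ∀ a, ‖P a‖ ≤ C)
  have hunif : TendstoUniformlyOn (fun a => ⇑(P a)) Q l (closure (k '' Metric.closedBall 0 1)) :=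
    (UniformOnFun.tendsto_iff_tendstoUniformlyOn.mp
      ((EquicontinuousOn.tendsto_uniformOnFun_iff_pi (𝔖 := {K | IsCompact K}) (fun _ hK => hK)
        (Set.eq_univ_of_forall fun y => ⟨{y}, isCompact_singleton, rfl⟩)
        (fun K _ => hequi.equicontinuousOn K) l Q).mpr (tendsto_pi_nhds.mpr hPQ)))
      _ (hk.isCompact_closure_image_closedBall 1)
  refine Metric.tendsto_nhds.mpr fun ε hε => ?_
  filter_upwards [Metric.tendstoUniformlyOn_iff.mp hunif (ε / 2) (by positivity)] with a ha
  rw [dist_eq_norm, ← sub_comp]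
  refine (opNorm_le_of_unit_norm (by positivity) fun x hx => ?_).trans_lt (half_lt_self hε)
  rw [comp_apply, sub_apply, ← dist_eq_norm']
  exact (ha (k x) (subset_closure ⟨x, by simp [hx], rfl⟩)).le

end NormedSpace

variable {𝕜 E F : Type*} [RCLike 𝕜] [NormedAddCommGroup E] [InnerProductSpace 𝕜 E]
  [NormedAddCommGroup F] [InnerProductSpace 𝕜 F]

theorem isCompactOperator_rankOne (x : F) (y : E) : IsCompactOperator (rankOne 𝕜 x y) :=
  (isCompactOperator_of_locallyCompactSpace_dom (innerSL 𝕜 y)).clm_comp (toSpanSingleton 𝕜 x)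

theorem Orthonormal.one_le_norm_sub_smul {ι : Type*} {v : ι → E} (hv : Orthonormal 𝕜 v) {i j : ι}
    (hij : i ≠ j) (c : 𝕜) : 1 ≤ ‖v i - c • v j‖ :=
  calc 1 = ‖inner 𝕜 (v i) (v i - c • v j)‖ := by
        simp [inner_sub_right, inner_smul_right, hv.inner_eq_zero hij, hv.1 i]
    _ ≤ ‖v i‖ * ‖v i - c • v j‖ := norm_inner_le_norm _ _
    _ = ‖v i - c • v j‖ := by rw [hv.1 i, one_mul]

namespace HilbertBasis

variable {ι : Type*} (b : HilbertBasis ι 𝕜 E)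

def proj (S : Finset ι) : E →L[𝕜] E := ∑ i ∈ S, rankOne 𝕜 (b i) (b i)

theorem clm_ext {f g : E →L[𝕜] F} (h : ∀ i, f (b i) = g (b i)) : f = g :=
  ContinuousLinearMap.ext_on (Submodule.dense_iff_topologicalClosure_eq_top.mpr b.dense_span)
    (Set.forall_mem_range.mpr h)

theorem proj_apply (S : Finset ι) (x : E) : b.proj S x = ∑ i ∈ S, inner 𝕜 (b i) x • b i := by
  simp [proj]

theorem tendsto_proj_apply (x : E) : Tendsto (fun S => b.proj S x) atTop (𝓝 x) := by
  simp only [proj_apply, ← b.repr_apply_apply]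
  exact b.hasSum_repr x

theorem proj_apply_basis [DecidableEq ι] (S : Finset ι) (i : ι) :
    b.proj S (b i) = if i ∈ S then b i else 0 := by
  simp [proj_apply, orthonormal_iff_ite.mp b.orthonormal]

theorem norm_proj_le_one (S : Finset ι) : ‖b.proj S‖ ≤ 1 := by
  refine opNorm_le_bound _ zero_le_one fun x => ?_
  rw [one_mul, ← sq_le_sq₀ (norm_nonneg _) (norm_nonneg _)]
  calc ‖b.proj S x‖ ^ 2 = ∑ i ∈ S, ‖inner 𝕜 (b i) x‖ ^ 2 := by
        rw [proj_apply, @norm_sq_eq_re_inner 𝕜, b.orthonormal.inner_sum]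
        simp only [RCLike.conj_mul, map_sum]
        norm_cast
    _ ≤ ‖x‖ ^ 2 := b.orthonormal.sum_inner_products_le x

theorem isCompactOperator_proj (S : Finset ι) : IsCompactOperator (b.proj S) :=
  (compactOperator (RingHom.id 𝕜) E E).sum_mem fun i _ => isCompactOperator_rankOne (b i) (b i)

theorem proj_comp_comp_proj (k : E →L[𝕜] E) (S : Finset ι) :
    b.proj S ∘L k ∘L b.proj S =
      ∑ i ∈ S, ∑ j ∈ S, inner 𝕜 (b i) (k (b j)) • rankOne 𝕜 (b i) (b j) := by
  rw [proj, finsetSum_comp]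
  simp only [comp_finsetSum, comp_rankOne _ _ k, rankOne_comp_rankOne]

variable [CompleteSpace E]

theorem adjoint_proj (S : Finset ι) : adjoint (b.proj S) = b.proj S := by
  simp [proj, map_sum]

end HilbertBasis

namespace IsCompactOperator

variable {ι : Type*}

theorem tendsto_proj_comp {k : E →L[𝕜] F} (hk : IsCompactOperator k) (b : HilbertBasis ι 𝕜 F) :
    Tendsto (fun S => b.proj S ∘L k) atTop (𝓝 k) := by
  simpa using
    hk.tendsto_comp_of_tendsto_apply b.norm_proj_le_one (Q := .id 𝕜 F) b.tendsto_proj_apply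

variable [CompleteSpace E] [CompleteSpace F]

theorem adjoint {k : E →L[𝕜] F} (hk : IsCompactOperator k) : IsCompactOperator (adjoint k) := by
  obtain ⟨_, b, -⟩ := exists_hilbertBasis 𝕜 F
  refine isCompactOperator_of_tendsto
    ((ContinuousLinearMap.adjoint.continuous.tendsto k).comp (hk.tendsto_proj_comp b))
    (Eventually.of_forall fun S => ?_)
  simp only [Function.comp_apply, adjoint_comp, b.adjoint_proj]
  exact (b.isCompactOperator_proj S).clm_comp (ContinuousLinearMap.adjoint k)

theorem tendsto_comp_proj {k : E →L[𝕜] F} (hk : IsCompactOperator k) (b : HilbertBasis ι 𝕜 E) :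
    Tendsto (fun S => k ∘L b.proj S) atTop (𝓝 k) := by
  have h := (ContinuousLinearMap.adjoint.continuous.tendsto _).comp (hk.adjoint.tendsto_proj_comp b)
  simpa [Function.comp_def, adjoint_comp, b.adjoint_proj] using h

theorem tendsto_apply_basis {k : E →L[𝕜] F} (hk : IsCompactOperator k) (b : HilbertBasis ι 𝕜 E) :
    Tendsto (fun i => k (b i)) cofinite (𝓝 0) := by
  classical
  refine Metric.tendsto_nhds.mpr fun ε hε => ?_
  obtain ⟨S, hS⟩ := (Metric.tendsto_nhds.mp (hk.tendsto_comp_proj b) ε hε).exists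
  filter_upwards [S.finite_toSet.compl_mem_cofinite] with i hi
  calc dist (k (b i)) 0 = ‖(k ∘L b.proj S - k) (b i)‖ := by
        simp [b.proj_apply_basis, show i ∉ S from hi]
    _ ≤ ‖k ∘L b.proj S - k‖ := by
        simpa [b.orthonormal.1 i] using (k ∘L b.proj S - k).le_opNorm (b i)
    _ < ε := by rwa [dist_eq_norm] at hS

theorem tendsto_proj_comp_comp_proj {k : E →L[𝕜] E} (hk : IsCompactOperator k)
    (b : HilbertBasis ι 𝕜 E) : Tendsto (fun S => b.proj S ∘L k ∘L b.proj S) atTop (𝓝 k) := by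
  have h : Tendsto (fun S => b.proj S ∘L (k ∘L b.proj S - k)) atTop (𝓝 0) := by
    refine squeeze_zero_norm (fun S => ?_)
      (tendsto_iff_norm_sub_tendsto_zero.mp (hk.tendsto_comp_proj b))
    calc ‖b.proj S ∘L (k ∘L b.proj S - k)‖ ≤ ‖b.proj S‖ * ‖k ∘L b.proj S - k‖ :=
          opNorm_comp_le _ _
      _ ≤ ‖k ∘L b.proj S - k‖ := mul_le_of_le_one_left (norm_nonneg _) (b.norm_proj_le_one S)
  simpa [comp_sub] using h.add (hk.tendsto_proj_comp b)

theorem mem_closure_of_rankOne_mem {M : Type*} [SetLike M (E →L[𝕜] E)]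
    [AddSubmonoidClass M (E →L[𝕜] E)] [SMulMemClass M 𝕜 (E →L[𝕜] E)] {A : M}
    (b : HilbertBasis ι 𝕜 E) (hA : ∀ i j, rankOne 𝕜 (b i) (b j) ∈ A) {k : E →L[𝕜] E}
    (hk : IsCompactOperator k) : k ∈ closure (A : Set (E →L[𝕜] E)) :=
  mem_closure_of_tendsto (hk.tendsto_proj_comp_comp_proj b) (Eventually.of_forall fun S => by
    rw [SetLike.mem_coe, b.proj_comp_comp_proj]
    exact sum_mem fun i _ => sum_mem fun j _ => SMulMemClass.smul_mem _ (hA i j))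

end IsCompactOperator

section scalarsAddCompacts

variable (𝕜 E) [CompleteSpace E]

def scalarsAddCompacts : StarSubalgebra 𝕜 (E →L[𝕜] E) where
  carrier := {T | ∃ (c : 𝕜) (k : E →L[𝕜] E), IsCompactOperator k ∧ T = c • 1 + k}
  algebraMap_mem' c :=
    ⟨c, 0, isCompactOperator_zero, by rw [Algebra.algebraMap_eq_smul_one, add_zero]⟩
  add_mem' := by
    rintro _ _ ⟨c, k, hk, rfl⟩ ⟨c', k', hk', rfl⟩
    exact ⟨c + c', k + k', hk.add hk', by rw [add_smul]; abel⟩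
  mul_mem' := by
    rintro _ _ ⟨c, k, hk, rfl⟩ ⟨c', k', hk', rfl⟩
    refine ⟨c * c', c • k' + c' • k + k * k',
      ((hk'.smul c).add (hk.smul c')).add (hk.comp_clm k'), ?_⟩
    simp only [mul_add, add_mul, smul_mul_assoc, mul_smul_comm, one_mul, mul_one, smul_add,
      smul_smul, mul_comm c' c]
    abel
  star_mem' := by
    rintro _ ⟨c, k, hk, rfl⟩
    exact ⟨star c, adjoint k, hk.adjoint, by simp [star_eq_adjoint]⟩

theorem isClosed_scalarsAddCompacts : IsClosed (scalarsAddCompacts 𝕜 E : Set (E →L[𝕜] E)) := by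
  have h : (scalarsAddCompacts 𝕜 E : Set (E →L[𝕜] E)) =
      (compactOperator (RingHom.id 𝕜) E E ⊔ 𝕜 ∙ 1 : Submodule 𝕜 (E →L[𝕜] E)) := by
    ext T
    simp only [SetLike.mem_coe, Submodule.mem_sup, Submodule.mem_span_singleton]
    constructor
    · rintro ⟨c, k, hk, rfl⟩
      exact ⟨k, hk, c • 1, ⟨c, rfl⟩, add_comm _ _⟩
    · rintro ⟨k, hk, _, ⟨c, rfl⟩, rfl⟩
      exact ⟨c, k, hk, add_comm _ _⟩
  rw [h]
  exact Submodule.isClosed_sup_finiteDimensional _ _ isClosed_setOfPred_isCompactOperator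

end scalarsAddCompacts

theorem Pr.two_le {x : ℤ} (hx : x ∈ Pr) : 2 ≤ x := by
  obtain ⟨p, hp, rfl⟩ := hx
  exact_mod_cast hp.two_le

theorem Pr.eq_two_or_emod_two_eq_one {x : ℤ} (hx : x ∈ Pr) : x = 2 ∨ x % 2 = 1 := by
  obtain ⟨p, hp, rfl⟩ := hx
  rcases hp.eq_two_or_odd with h | h <;> omega

/-- Take `a = 1` for `r = 2` and `a = 2 - r` for odd `r`: of two primes at odd distance, one
is `2`. -/
theorem exists_add_mem_Pr_iff_eq (r : Pr) : ∃ a : ℤ, ∀ x : Pr, (x : ℤ) + a ∈ Pr ↔ x = r := by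
  have hr2 := Pr.two_le r.2
  rcases Pr.eq_two_or_emod_two_eq_one r.2 with hr | hr
  · refine ⟨1, fun x => ⟨fun hx => Subtype.ext ?_, ?_⟩⟩
    · have := Pr.eq_two_or_emod_two_eq_one x.2
      have := Pr.eq_two_or_emod_two_eq_one hx
      have := Pr.two_le x.2
      omega
    · rintro rfl
      rw [hr]
      exact ⟨3, Nat.prime_three, rfl⟩
  · refine ⟨2 - r, fun x => ⟨fun hx => Subtype.ext ?_, ?_⟩⟩
    · have := Pr.eq_two_or_emod_two_eq_one x.2
      have := Pr.eq_two_or_emod_two_eq_one hx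
      have := Pr.two_le hx
      omega
    · rintro rfl
      rw [add_sub_cancel]
      exact ⟨2, Nat.prime_two, rfl⟩

theorem finite_primePairs_of_ne_zero
    (H : ∀ n : ℤ, 0 < n → Even n → {p : ℤ | p ∈ Pr ∧ p + n ∈ Pr}.Finite) {n : ℤ} (hn : n ≠ 0) :
    {p : ℤ | p ∈ Pr ∧ p + n ∈ Pr}.Finite := by
  rcases Int.even_or_odd n with he | ho
  · rcases hn.lt_or_gt with hneg | hpos
    · refine ((H (-n) (by omega) he.neg).image (· - n)).subset fun p ⟨hp, hpn⟩ => ?_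
      exact ⟨p + n, ⟨hpn, by simpa using hp⟩, by ring⟩
    · exact H n hpos he
  · refine (Set.toFinite {2, 2 - n}).subset fun p ⟨hp, hpn⟩ => ?_
    have := Pr.eq_two_or_emod_two_eq_one hp
    have := Pr.eq_two_or_emod_two_eq_one hpn
    rw [Int.odd_iff] at ho
    simp only [Set.mem_insert_iff, Set.mem_singleton_iff]
    omega

def deltaBasis : HilbertBasis Pr ℂ l2P := HilbertBasis.ofRepr (LinearIsometryEquiv.refl ℂ l2P)

theorem deltaBasis_apply (x : Pr) : deltaBasis x = δ x :=
  (deltaBasis.repr_symm_single x).symm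

theorem inner_delta_delta (x y : Pr) : inner ℂ (δ x) (δ y) = if x = y then 1 else 0 := by
  simpa [deltaBasis_apply] using orthonormal_iff_ite.mp deltaBasis.orthonormal x y

def IsPartialTranslation (t : ℤ → l2P →L[ℂ] l2P) : Prop :=
  ∀ (n : ℤ) (x : Pr), (∀ h : (x : ℤ) + n ∈ Pr, t n (δ x) = δ ⟨(x : ℤ) + n, h⟩) ∧
    ((x : ℤ) + n ∉ Pr → t n (δ x) = 0)

namespace IsPartialTranslation

variable {t : ℤ → l2P →L[ℂ] l2P}

theorem apply_delta_of_add_eq (ht : IsPartialTranslation t) {n : ℤ} {x y : Pr}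
    (h : (x : ℤ) + n = y) : t n (δ x) = δ y := by
  rw [(ht n x).1 (h ▸ y.2)]
  exact congrArg δ (Subtype.ext h)

theorem zero (ht : IsPartialTranslation t) : t 0 = 1 :=
  deltaBasis.clm_ext fun x => by
    simp [deltaBasis_apply, ht.apply_delta_of_add_eq (add_zero (x : ℤ))]

theorem isCompactOperator (ht : IsPartialTranslation t) {n : ℤ}
    (hfin : {p : ℤ | p ∈ Pr ∧ p + n ∈ Pr}.Finite) : IsCompactOperator (t n) := by
  classical
  set S := (hfin.preimage Subtype.val_injective.injOn).toFinset
  have hS : ∀ x : Pr, x ∈ S ↔ (x : ℤ) + n ∈ Pr := fun x => by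
    simp only [S, Set.Finite.mem_toFinset, Set.mem_preimage, Set.mem_ofPred_eq]
    exact and_iff_right x.2
  have h : t n = t n ∘L deltaBasis.proj S := deltaBasis.clm_ext fun x => by
    rw [comp_apply, deltaBasis.proj_apply_basis]
    by_cases hx : (x : ℤ) + n ∈ Pr
    · rw [if_pos ((hS x).2 hx)]
    · rw [if_neg (mt (hS x).1 hx), map_zero, deltaBasis_apply, (ht n x).2 hx]
  rw [h]
  exact (deltaBasis.isCompactOperator_proj S).clm_comp (t n)

theorem neg_mul_self (ht : IsPartialTranslation t) {a : ℤ} {r : Pr}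
    (ha : ∀ x : Pr, (x : ℤ) + a ∈ Pr ↔ x = r) : t (-a) * t a = rankOne ℂ (δ r) (δ r) := by
  refine deltaBasis.clm_ext fun x => ?_
  simp only [deltaBasis_apply, mul_apply_eq_comp, rankOne_apply, inner_delta_delta]
  by_cases hx : x = r
  · subst hx
    rw [(ht a x).1 ((ha x).2 rfl), ht.apply_delta_of_add_eq (y := x) (by simp)]
    simp
  · rw [(ht a x).2 (mt (ha x).1 hx), map_zero, if_neg (Ne.symm hx), zero_smul]

theorem rankOne_mem_adjoin (ht : IsPartialTranslation t) (p q : Pr) :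
    rankOne ℂ (δ p) (δ q) ∈ StarAlgebra.adjoin ℂ (Set.range t) := by
  obtain ⟨a, ha⟩ := exists_add_mem_Pr_iff_eq p
  obtain ⟨b, hb⟩ := exists_add_mem_Pr_iff_eq q
  have hgen : ∀ m, t m ∈ StarAlgebra.adjoin ℂ (Set.range t) :=
    fun m => StarAlgebra.subset_adjoin ℂ _ ⟨m, rfl⟩
  have h : rankOne ℂ (δ p) (δ q) = t (-a) * t a * t (p - q) * (t (-b) * t b) := by
    rw [ht.neg_mul_self ha, ht.neg_mul_self hb, mul_def, mul_def, comp_rankOne, comp_apply,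
      ht.apply_delta_of_add_eq (y := p) (by ring), rankOne_apply, inner_delta_delta, if_pos rfl,
      one_smul]
  rw [h]
  exact mul_mem (mul_mem (mul_mem (hgen _) (hgen _)) (hgen _)) (mul_mem (hgen _) (hgen _))

theorem finite_of_mem_scalarsAddCompacts (ht : IsPartialTranslation t) {n : ℤ} (hn : n ≠ 0)
    (h : t n ∈ scalarsAddCompacts ℂ l2P) : {p : ℤ | p ∈ Pr ∧ p + n ∈ Pr}.Finite := by
  obtain ⟨c, k, hk, hck⟩ := h
  have hfin : {x : Pr | 1 ≤ ‖k (δ x)‖}.Finite := by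
    have := (hk.tendsto_apply_basis deltaBasis).eventually (Metric.ball_mem_nhds 0 one_pos)
    simpa [deltaBasis_apply] using this
  refine (hfin.image Subtype.val).subset fun p ⟨hp, hpn⟩ => ⟨⟨p, hp⟩, ?_, rfl⟩
  have hkp : k (δ ⟨p, hp⟩) = δ ⟨p + n, hpn⟩ - c • δ ⟨p, hp⟩ := by
    rw [← (ht n ⟨p, hp⟩).1 hpn, hck]
    simp
  show 1 ≤ ‖k (δ ⟨p, hp⟩)‖
  rw [hkp, ← deltaBasis_apply, ← deltaBasis_apply]
  exact deltaBasis.orthonormal.one_le_norm_sub_smul (by simpa [Subtype.ext_iff] using hn) c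

theorem scalarsAddCompacts_le_topologicalClosure (ht : IsPartialTranslation t) :
    scalarsAddCompacts ℂ l2P ≤ (StarAlgebra.adjoin ℂ (Set.range t)).topologicalClosure := by
  rintro _ ⟨c, k, hk, rfl⟩
  refine add_mem ?_ ?_
  · rw [← Algebra.algebraMap_eq_smul_one]
    exact algebraMap_mem _ c
  · rw [← SetLike.mem_coe, StarSubalgebra.topologicalClosure_coe]
    refine (hk.mem_closure_of_rankOne_mem deltaBasis fun p q => ?_)
    simpa [deltaBasis_apply] using ht.rankOne_mem_adjoin p q

theorem topologicalClosure_adjoin_le (ht : IsPartialTranslation t)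
    (hfin : ∀ n ≠ 0, {p : ℤ | p ∈ Pr ∧ p + n ∈ Pr}.Finite) :
    (StarAlgebra.adjoin ℂ (Set.range t)).topologicalClosure ≤ scalarsAddCompacts ℂ l2P := by
  refine StarSubalgebra.topologicalClosure_minimal (StarAlgebra.adjoin_le ?_)
    (isClosed_scalarsAddCompacts ℂ l2P)
  rintro _ ⟨n, rfl⟩
  rcases eq_or_ne n 0 with rfl | hn
  · rw [ht.zero]
    exact one_mem _
  · exact ⟨0, t n, ht.isCompactOperator (hfin n hn), by rw [zero_smul, zero_add]⟩

end IsPartialTranslation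

/-- The C*-subalgebra of `B(ℓ²(P))` generated by the partial translation operators
`{tₙ : n ∈ ℤ}` equals the unitization `{λ·1 + k : λ ∈ ℂ, k compact}` of the compact
operators if and only if for every positive even integer `n` the set of primes `p`
with `p + n` prime is finite (i.e. de Polignac's conjecture fails for every even `n`). -/
theorem stmt11 (t : ℤ → (l2P →L[ℂ] l2P))
    (ht : ∀ (n : ℤ) (x : Pr),
      (∀ h : (x : ℤ) + n ∈ Pr, t n (δ x) = δ ⟨(x : ℤ) + n, h⟩) ∧
      ((x : ℤ) + n ∉ Pr → t n (δ x) = 0)) :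
    (∀ T : l2P →L[ℂ] l2P,
      T ∈ (StarAlgebra.adjoin ℂ (Set.range t)).topologicalClosure ↔
      ∃ (c : ℂ) (k : l2P →L[ℂ] l2P), IsCompactOperator k ∧ T = c • 1 + k) ↔
    (∀ n : ℤ, 0 < n → Even n → {p : ℤ | p ∈ Pr ∧ p + n ∈ Pr}.Finite) := by
  replace ht : IsPartialTranslation t := ht
  constructor
  · intro Heq n hn _
    refine ht.finite_of_mem_scalarsAddCompacts hn.ne' ((Heq (t n)).mp ?_)
    exact StarSubalgebra.le_topologicalClosure _ (StarAlgebra.subset_adjoin ℂ _ ⟨n, rfl⟩)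
  · intro H T
    have h := le_antisymm
      (ht.topologicalClosure_adjoin_le fun n hn => finite_primePairs_of_ne_zero H hn)
      ht.scalarsAddCompacts_le_topologicalClosure
    exact SetLike.ext_iff.mp h T
end
end
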